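/- Let λ ⊢ k-l and δ ∈ ℂ with δ ∉ {-h(λ),...,2k-2} and also δ' := δ not in {-h(ρ),...,2k-2} for ρ ⊢ k-r. If ∏_{i=0}^{k-l-1}(1+(i-δ/2)t)/∏_{j∈D(λ)}(1+(δ/2-j)t)^{m_λ(j)} = ∏_{i=0}^{k-r-1}(1+(i-δ/2)t)/∏_{j∈D(ρ)}(1+(δ/2-j)t)^{m_ρ(j)}, then l = r and λ = ρ. -/

import Mathlib

/-- For a partition `λ` with `|λ| = n` (so `n = k - l`), the generating function
`λ(t) = ∏_{i=0}^{n-1}(1+(i-δ/2)t) / ∏_{a∈λ}(1+(δ/2-c(a))t)` as a rational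
function in `t` over `ℂ` (the product over boxes grouped by content `j ∈ D(λ)`
gives the factors `(1+(δ/2-j)t)^{m_λ(j)}`). -/
noncomputable def genFn (δ : ℂ) (n : ℕ) (lam : YoungDiagram) : RatFunc ℂ :=
  (∏ i ∈ Finset.range n, (1 + RatFunc.C ((i : ℂ) - δ / 2) * RatFunc.X)) /
    (∏ a ∈ lam.cells,
      (1 + RatFunc.C (δ / 2 - (((a.2 : ℤ) - (a.1 : ℤ) : ℤ) : ℂ)) * RatFunc.X))

open Polynomial

/-! ### Auxiliary definitions -/

/-- Number of boxes of `lam` with content `j`. -/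
def contentCount (lam : YoungDiagram) (j : ℤ) : ℕ :=
  (lam.cells.filter (fun a => ((a.2 : ℤ) - (a.1 : ℤ)) = j)).card

/-- The numerator polynomial. -/
noncomputable def numP (δ : ℂ) (n : ℕ) : Polynomial ℂ :=
  ∏ i ∈ Finset.range n, (1 + C ((i : ℂ) - δ / 2) * X)

/-- The denominator polynomial. -/
noncomputable def denomP (δ : ℂ) (lam : YoungDiagram) : Polynomial ℂ :=
  ∏ a ∈ lam.cells, (1 + C (δ / 2 - (((a.2 : ℤ) - (a.1 : ℤ) : ℤ) : ℂ)) * X)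

/-! ### Basic polynomial lemmas -/

lemma one_add_C_mul_X_ne_zero (c : ℂ) : (1 + C c * X : Polynomial ℂ) ≠ 0 := by
  intro h
  have := congrArg (fun p => Polynomial.coeff p 0) h
  simp at this

lemma coprime_linear {a b : ℂ} (hab : a ≠ b) :
    IsCoprime (1 + C a * X : Polynomial ℂ) (1 + C b * X) := by
  have hba : b - a ≠ 0 := sub_ne_zero.mpr (Ne.symm hab)
  refine ⟨C (b * (b - a)⁻¹), C (-(a * (b - a)⁻¹)), ?_⟩
  have h1 : b * (b - a)⁻¹ + -(a * (b - a)⁻¹) = 1 := by field_simp; ring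
  have h2 : b * (b - a)⁻¹ * a + -(a * (b - a)⁻¹) * b = 0 := by field_simp; ring
  have : (C (b * (b - a)⁻¹) * (1 + C a * X) + C (-(a * (b - a)⁻¹)) * (1 + C b * X) : Polynomial ℂ)
      = C (b * (b - a)⁻¹ + -(a * (b - a)⁻¹)) + C (b * (b - a)⁻¹ * a + -(a * (b - a)⁻¹) * b) * X := by
    simp only [C_add, C_mul]; ring
  rw [this, h1, h2]; simp

lemma roots_one_add_C_mul_X {c : ℂ} (hc : c ≠ 0) :
    (1 + C c * X : Polynomial ℂ).roots = {-c⁻¹} := by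
  have : (1 + C c * X : Polynomial ℂ) = C c * (X - C (-c⁻¹)) := by
    rw [mul_sub, ← C_mul, mul_neg, mul_inv_cancel₀ hc]
    simp [add_comm]
  rw [this, roots_C_mul _ hc, roots_X_sub_C]

lemma numP_ne_zero (δ : ℂ) (n : ℕ) : numP δ n ≠ 0 :=
  Finset.prod_ne_zero_iff.mpr fun _ _ => one_add_C_mul_X_ne_zero _

lemma denomP_ne_zero (δ : ℂ) (lam : YoungDiagram) : denomP δ lam ≠ 0 :=
  Finset.prod_ne_zero_iff.mpr fun _ _ => one_add_C_mul_X_ne_zero _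

/-! ### Young diagram basics -/

lemma cell_col_lt_card {lam : YoungDiagram} {a : ℕ × ℕ} (ha : a ∈ lam.cells) :
    a.2 < lam.card := by
  have hmap : ∀ y ∈ Finset.range (a.2 + 1), (a.1, y) ∈ lam.cells := by
    intro y hy
    simp only [Finset.mem_range] at hy
    rw [YoungDiagram.mem_cells]
    exact lam.up_left_mem le_rfl (show y ≤ a.2 by omega) (by rwa [YoungDiagram.mem_cells] at ha)
  have := Finset.card_le_card_of_injOn _ hmap
    (fun y _ z _ h => by simpa using (Prod.mk.injEq _ _ _ _ ▸ h : _ ∧ _).2)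
  simp only [Finset.card_range] at this
  exact lt_of_lt_of_le (Nat.lt_succ_self _) this

lemma cell_row_lt_colLen {lam : YoungDiagram} {a : ℕ × ℕ} (ha : a ∈ lam.cells) :
    a.1 < lam.colLen 0 := by
  rw [← YoungDiagram.mem_iff_lt_colLen]
  exact lam.up_left_mem le_rfl (Nat.zero_le _) (by rwa [YoungDiagram.mem_cells] at ha)

/-- A Young diagram is determined by its content counts. -/
lemma mem_iff_min_lt_contentCount (lam : YoungDiagram) (i x : ℕ) :
    (i, x) ∈ lam ↔ min i x < contentCount lam ((x : ℤ) - (i : ℤ)) := by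
  set S := lam.cells.filter (fun a => ((a.2 : ℤ) - (a.1 : ℤ)) = (x : ℤ) - (i : ℤ)) with hS
  have hSc : contentCount lam ((x : ℤ) - (i : ℤ)) = S.card := rfl
  rw [hSc]
  constructor
  · intro h
    have hmap : ∀ i' ∈ Finset.Icc (i - x) i, (i', x + i' - i) ∈ S := by
      intro i' hi'
      simp only [Finset.mem_Icc] at hi'
      simp only [hS, Finset.mem_filter, YoungDiagram.mem_cells]
      constructor
      · exact lam.up_left_mem hi'.2 (by omega) h
      · push_cast [Nat.cast_sub (by omega : i ≤ x + i')]
        omega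
    have hcard := Finset.card_le_card_of_injOn _ hmap
      (fun a _ b _ hab => by simpa using (Prod.mk.injEq _ _ _ _ ▸ hab : _ ∧ _).1)
    have hIcc : (Finset.Icc (i - x) i).card = min i x + 1 := by
      rw [Nat.card_Icc]; omega
    omega
  · intro h
    by_cases hex : ∃ a ∈ S, i ≤ a.1
    · obtain ⟨a, haS, hai⟩ := hex
      simp only [hS, Finset.mem_filter, YoungDiagram.mem_cells] at haS
      have hx : x ≤ a.2 := by omega
      exact lam.up_left_mem hai hx haS.1
    · push_neg at hex
      have hmap : ∀ a ∈ S, a.1 ∈ Finset.Ico (i - x) i := by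
        intro a ha
        have hlt := hex a ha
        simp only [hS, Finset.mem_filter, YoungDiagram.mem_cells] at ha
        simp only [Finset.mem_Ico]
        omega
      have hinj : ∀ a ∈ S, ∀ b ∈ S, a.1 = b.1 → a = b := by
        intro a ha b hb hab
        simp only [hS, Finset.mem_filter, YoungDiagram.mem_cells] at ha hb
        have h1 := ha.2
        have h2 := hb.2
        exact Prod.ext hab (by omega)
      have hcard := Finset.card_le_card_of_injOn _ hmap hinj
      have hIco : (Finset.Ico (i - x) i).card = min i x := by
        rw [Nat.card_Ico]; omega
      omega

lemma genFn_eq (δ : ℂ) (n : ℕ) (lam : YoungDiagram) :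
    genFn δ n lam = algebraMap (Polynomial ℂ) (RatFunc ℂ) (numP δ n) /
      algebraMap (Polynomial ℂ) (RatFunc ℂ) (denomP δ lam) := by
  unfold genFn numP denomP
  rw [map_prod, map_prod]
  simp only [map_add, map_mul, map_one, RatFunc.algebraMap_C, RatFunc.algebraMap_X]

lemma cross_mul_of_genFn_eq {δ : ℂ} {n m : ℕ} {lam rho : YoungDiagram}
    (h : genFn δ n lam = genFn δ m rho) :
    numP δ n * denomP δ rho = numP δ m * denomP δ lam := by
  rw [genFn_eq, genFn_eq] at h
  have hd1 : algebraMap (Polynomial ℂ) (RatFunc ℂ) (denomP δ lam) ≠ 0 :=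
    RatFunc.algebraMap_ne_zero (denomP_ne_zero δ lam)
  have hd2 : algebraMap (Polynomial ℂ) (RatFunc ℂ) (denomP δ rho) ≠ 0 :=
    RatFunc.algebraMap_ne_zero (denomP_ne_zero δ rho)
  rw [div_eq_div_iff hd1 hd2] at h
  apply RatFunc.algebraMap_injective ℂ
  simpa only [map_mul] using h

/-! ### Coprimality and degree -/

lemma coprime_numP_denomP (δ : ℂ) (k l : ℕ) (hl : l ≤ k) (lam : YoungDiagram)
    (hlam : lam.card = k - l)
    (hδ : ∀ z : ℤ, -((lam.colLen 0 : ℤ) - 1) ≤ z → z ≤ 2 * (k : ℤ) - 2 → δ ≠ (z : ℂ)) :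
    IsCoprime (numP δ (k - l)) (denomP δ lam) := by
  apply IsCoprime.prod_left
  intro i hi
  apply IsCoprime.prod_right
  intro a ha
  apply coprime_linear
  intro hab
  have hj1 : (a.1 : ℤ) < (lam.colLen 0 : ℤ) := by exact_mod_cast cell_row_lt_colLen ha
  have hj2 : (a.2 : ℤ) < ((k : ℤ) - l) := by
    have h1 := cell_col_lt_card ha
    rw [hlam] at h1
    have h2 : (a.2 : ℤ) < ((k - l : ℕ) : ℤ) := by exact_mod_cast h1
    have : ((k - l : ℕ) : ℤ) = (k : ℤ) - l := by
      rw [Nat.cast_sub hl]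
    omega
  have hik : (i : ℤ) < (k : ℤ) - l := by
    have := Finset.mem_range.mp hi
    have h2 : (i : ℤ) < ((k - l : ℕ) : ℤ) := by exact_mod_cast this
    rw [Nat.cast_sub hl] at h2
    exact h2
  have hlk : (l : ℤ) ≤ (k : ℤ) := by exact_mod_cast hl
  refine hδ ((i : ℤ) + ((a.2 : ℤ) - (a.1 : ℤ))) (by omega) (by omega) ?_
  have hδeq : δ = (i : ℂ) + (((a.2 : ℤ) - (a.1 : ℤ) : ℤ) : ℂ) := by
    linear_combination -hab
  rw [hδeq]
  push_cast
  ring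

lemma natDegree_numP (δ : ℂ) (k l : ℕ) (hl : l ≤ k) (lam : YoungDiagram)
    (hlam : lam.card = k - l)
    (hδ : ∀ z : ℤ, -((lam.colLen 0 : ℤ) - 1) ≤ z → z ≤ 2 * (k : ℤ) - 2 → δ ≠ (z : ℂ)) :
    (numP δ (k - l)).natDegree = k - l := by
  unfold numP
  rw [natDegree_prod _ _ (fun i _ => one_add_C_mul_X_ne_zero _)]
  have hstep : ∀ i ∈ Finset.range (k - l), (1 + C ((i : ℂ) - δ / 2) * X).natDegree = 1 := by
    intro i hi
    have hi' := Finset.mem_range.mp hi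
    have hcol : 1 ≤ lam.colLen 0 := by
      have hpos : 0 < lam.card := by omega
      obtain ⟨a, ha⟩ := Finset.card_pos.mp hpos
      have := cell_row_lt_colLen ha
      omega
    have hne : ((i : ℂ) - δ / 2) ≠ 0 := by
      intro h0
      have hik : (i : ℤ) < (k : ℤ) - l := by
        have h2 : (i : ℤ) < ((k - l : ℕ) : ℤ) := by exact_mod_cast hi'
        rw [Nat.cast_sub hl] at h2
        exact h2
      have hlk : (l : ℤ) ≤ (k : ℤ) := by exact_mod_cast hl
      have hcol' : (1 : ℤ) ≤ (lam.colLen 0 : ℤ) := by exact_mod_cast hcol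
      refine hδ (2 * (i : ℤ)) (by omega) (by omega) ?_
      push_cast
      linear_combination (-2 : ℂ) * h0
    rw [show (1 + C ((i : ℂ) - δ / 2) * X : Polynomial ℂ)
        = C ((i : ℂ) - δ / 2) * X + C 1 by rw [C_1]; ring]
    exact natDegree_linear hne
  rw [Finset.sum_congr rfl hstep, Finset.sum_const, smul_eq_mul, mul_one, Finset.card_range]

/-! ### Counting contents via roots -/

lemma contentCount_eq_count_roots (δ : ℂ) (lam : YoungDiagram) (j : ℤ)
    (hc : δ / 2 - (j : ℂ) ≠ 0) :
    contentCount lam j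
      = Multiset.count (-(δ / 2 - (j : ℂ))⁻¹) (denomP δ lam).roots := by
  unfold denomP
  rw [roots_prod _ _ (denomP_ne_zero δ lam), Multiset.count_bind]
  have h0 : (Multiset.map
      (fun a => Multiset.count (-(δ / 2 - (j : ℂ))⁻¹)
        ((1 + C (δ / 2 - (((a.2 : ℤ) - (a.1 : ℤ) : ℤ) : ℂ)) * X).roots)) lam.cells.val).sum
      = ∑ a ∈ lam.cells, Multiset.count (-(δ / 2 - (j : ℂ))⁻¹)
        ((1 + C (δ / 2 - (((a.2 : ℤ) - (a.1 : ℤ) : ℤ) : ℂ)) * X).roots) := rfl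
  rw [h0]
  unfold contentCount
  rw [Finset.card_filter]
  refine Finset.sum_congr rfl fun a _ => ?_
  by_cases hj : ((a.2 : ℤ) - (a.1 : ℤ)) = j
  · rw [if_pos hj, hj, roots_one_add_C_mul_X hc, Multiset.count_singleton, if_pos rfl]
  · rw [if_neg hj]
    by_cases hz : δ / 2 - (((a.2 : ℤ) - (a.1 : ℤ) : ℤ) : ℂ) = 0
    · have h1 : (1 + C (δ / 2 - (((a.2 : ℤ) - (a.1 : ℤ) : ℤ) : ℂ)) * X : Polynomial ℂ) = 1 := by
        rw [hz]; simp
      rw [h1, roots_one]; simp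
    · rw [roots_one_add_C_mul_X hz, Multiset.count_singleton, if_neg]
      intro h
      apply hj
      have h2 := inv_injective (neg_injective h)
      have h3 := sub_right_injective h2
      exact_mod_cast h3.symm

/-! ### Main theorem -/

/-- If `δ ∉ {-h(λ),…,2k-2}` and `δ ∉ {-h(ρ),…,2k-2}`, then equality of the
(reduced) generating functions of `(λ,l)` and `(ρ,r)` forces `l = r` and
`λ = ρ`. -/
theorem genFn_injective_of_delta_generic
    (δ : ℂ) (k l r : ℕ) (hl : l ≤ k) (hr : r ≤ k)
    (lam rho : YoungDiagram) (hlam : lam.card = k - l) (hrho : rho.card = k - r)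
    (hδlam : ∀ z : ℤ, -((lam.colLen 0 : ℤ) - 1) ≤ z → z ≤ 2 * (k : ℤ) - 2 → δ ≠ (z : ℂ))
    (hδrho : ∀ z : ℤ, -((rho.colLen 0 : ℤ) - 1) ≤ z → z ≤ 2 * (k : ℤ) - 2 → δ ≠ (z : ℂ))
    (heq : genFn δ (k - l) lam = genFn δ (k - r) rho) :
    l = r ∧ lam = rho := by
  have hcross := cross_mul_of_genFn_eq heq
  have hco1 := coprime_numP_denomP δ k l hl lam hlam hδlam
  have hco2 := coprime_numP_denomP δ k r hr rho hrho hδrho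
  -- D1 = D2
  have hd12 : denomP δ lam ∣ denomP δ rho := by
    refine hco1.symm.dvd_of_dvd_mul_left ?_
    rw [hcross]
    exact dvd_mul_left _ _
  have hd21 : denomP δ rho ∣ denomP δ lam := by
    refine hco2.symm.dvd_of_dvd_mul_left ?_
    rw [← hcross]
    exact dvd_mul_left _ _
  obtain ⟨u, hu⟩ := associated_of_dvd_dvd hd12 hd21
  obtain ⟨c, -, hcu⟩ := Polynomial.isUnit_iff.mp u.isUnit
  have heval : ∀ (μ : YoungDiagram), Polynomial.eval 0 (denomP δ μ) = 1 := by
    intro μ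
    unfold denomP
    rw [eval_prod]
    exact Finset.prod_eq_one fun a _ => by simp
  have hD : denomP δ lam = denomP δ rho := by
    have h1 := congrArg (Polynomial.eval 0) hu
    rw [eval_mul, heval lam, heval rho, ← hcu] at h1
    simp only [eval_C, one_mul] at h1
    rw [← hu, ← hcu, h1]
    simp
  have hN : numP δ (k - l) = numP δ (k - r) := by
    have h1 : numP δ (k - l) * denomP δ rho = numP δ (k - r) * denomP δ rho := by
      rw [hcross, hD]
    exact mul_right_cancel₀ (denomP_ne_zero δ rho) h1
  -- l = r
  have hdeg : k - l = k - r := by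
    have h1 := natDegree_numP δ k l hl lam hlam hδlam
    have h2 := natDegree_numP δ k r hr rho hrho hδrho
    rw [← h1, hN, h2]
  have hlr : l = r := by omega
  refine ⟨hlr, ?_⟩
  -- content counts agree away from δ/2
  have hcnt : ∀ j : ℤ, δ / 2 - (j : ℂ) ≠ 0 → contentCount lam j = contentCount rho j := by
    intro j hj
    rw [contentCount_eq_count_roots δ lam j hj, contentCount_eq_count_roots δ rho j hj, hD]
  -- content counts agree everywhere
  have hcnt' : ∀ j : ℤ, contentCount lam j = contentCount rho j := by
    by_cases hex : ∃ j0 : ℤ, ((j0 : ℂ) = δ / 2)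
    · obtain ⟨j0, hj0⟩ := hex
      set M1 : Multiset ℤ := lam.cells.val.map (fun a => (a.2 : ℤ) - (a.1 : ℤ)) with hM1
      set M2 : Multiset ℤ := rho.cells.val.map (fun a => (a.2 : ℤ) - (a.1 : ℤ)) with hM2
      have hcc : ∀ (μ : YoungDiagram) (j : ℤ), contentCount μ j
          = Multiset.count j (μ.cells.val.map (fun a => (a.2 : ℤ) - (a.1 : ℤ))) := by
        intro μ j
        rw [Multiset.count_map]
        unfold contentCount
        rw [show (Finset.filter (fun a => ((a.2 : ℤ) - (a.1 : ℤ)) = j) μ.cells).card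
            = Multiset.card (Multiset.filter (fun a => ((a.2 : ℤ) - (a.1 : ℤ)) = j) μ.cells.val)
            from rfl]
        congr 1
        exact Multiset.filter_congr (fun a _ => eq_comm)
      have hne : ∀ j : ℤ, j ≠ j0 → δ / 2 - (j : ℂ) ≠ 0 := by
        intro j hjne h0
        apply hjne
        have : (j : ℂ) = (j0 : ℂ) := by
          rw [hj0]
          linear_combination -h0
        exact_mod_cast this
      have hcount : ∀ j : ℤ, j ≠ j0 → Multiset.count j M1 = Multiset.count j M2 := by
        intro j hjne
        rw [← hcc lam j, ← hcc rho j]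
        exact hcnt j (hne j hjne)
      have hcard : Multiset.card M1 = Multiset.card M2 := by
        rw [hM1, hM2, Multiset.card_map, Multiset.card_map]
        show lam.card = rho.card
        rw [hlam, hrho, hdeg]
      have hfilt : M1.filter (fun x => ¬ j0 = x) = M2.filter (fun x => ¬ j0 = x) := by
        ext j
        rw [Multiset.count_filter, Multiset.count_filter]
        by_cases hjj : j0 = j
        · rw [if_neg (by simp [hjj]), if_neg (by simp [hjj])]
        · rw [if_pos hjj, if_pos hjj]
          exact hcount j (fun h => hjj h.symm)
      have hc0 : Multiset.count j0 M1 = Multiset.count j0 M2 := by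
        have e1 := congrArg Multiset.card (Multiset.filter_add_not (fun x => j0 = x) M1)
        have e2 := congrArg Multiset.card (Multiset.filter_add_not (fun x => j0 = x) M2)
        rw [Multiset.card_add] at e1 e2
        rw [Multiset.count_eq_card_filter_eq, Multiset.count_eq_card_filter_eq]
        have := congrArg Multiset.card hfilt
        omega
      intro j
      rw [hcc lam j, hcc rho j, ← hM1, ← hM2]
      by_cases hjj : j = j0
      · rw [hjj]; exact hc0
      · exact hcount j hjj
    · intro j
      apply hcnt
      intro h0
      exact hex ⟨j, by linear_combination -h0⟩
  -- conclude lam = rho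
  ext ⟨i, x⟩
  rw [YoungDiagram.mem_cells, YoungDiagram.mem_cells, mem_iff_min_lt_contentCount lam i x, mem_iff_min_lt_contentCount rho i x, hcnt']
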